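/- arXiv:1905.08592 — 6 statements merged into one kernel-verified Lean document; each statement's English description precedes it below -/
import Mathlib

section
/- Let X be a set of jobs on machine i, T > 0, B = {j ∈ X : p̂_{ij} > T/Γ}, and define modified processing times p_{ij} = p̄_{ij} + p̂_{ij} for j ∈ B and p_{ij} = p̄_{ij} otherwise. If the worst-case robust load of X is at most T, then ∑_{j∈X} p_{ij} ≤ T. -/
/-! A job whose deviation exceeds `T / Γ` must be among the `Γ` largest deviations: otherwise
the top `Γ` deviations alone would each exceed `T / Γ` and sum to more than `T`. Hence the
deviations added on `B` are bounded by `p̂_Γ(X)`, and the modified load by the robust load. -/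

open Finset

theorem Finset.filter_div_lt_subset_of_sum_top_le {J : Type*} [DecidableEq J] {f : J → ℝ}
    {X G : Finset J} {Γ : ℕ} {S : ℝ} (hΓ : 1 ≤ Γ) (hGX : G ⊆ X)
    (hcard : G.card = min Γ X.card)
    (htop : ∀ j ∈ G, ∀ k ∈ X \ G, f k ≤ f j) (hS : ∑ j ∈ G, f j ≤ S) :
    X.filter (fun j => S / Γ < f j) ⊆ G := by
  intro j hj
  rw [mem_filter] at hj
  by_contra hjG
  have hGΓ : G.card = Γ := by
    have := card_lt_card ((ssubset_iff_of_subset hGX).mpr ⟨j, hj.1, hjG⟩)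
    omega
  have hΓpos : (0 : ℝ) < Γ := by exact_mod_cast hΓ
  have hlt : S < Γ * f j := (div_lt_iff₀' hΓpos).mp hj.2
  have hle : Γ * f j ≤ ∑ k ∈ G, f k := by
    have hjXG : j ∈ X \ G := mem_sdiff.mpr ⟨hj.1, hjG⟩
    simpa [hGΓ] using card_nsmul_le_sum G f (f j) fun k hk => htop k hk j hjXG
  linarith

theorem stmt3_general {J : Type*} [DecidableEq J]
    (pbar phat : J → ℝ) (hpbar : ∀ j, 0 ≤ pbar j) (hphat : ∀ j, 0 ≤ phat j)
    (Γ : ℕ) (hΓ : 1 ≤ Γ) (T : ℝ)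
    (X G : Finset J) (hGX : G ⊆ X) (hcard : G.card = min Γ X.card)
    (htop : ∀ j ∈ G, ∀ k ∈ X \ G, phat k ≤ phat j)
    (hload : ∑ j ∈ X, pbar j + ∑ j ∈ G, phat j ≤ T) :
    ∑ j ∈ X, (if T / (Γ : ℝ) < phat j then pbar j + phat j else pbar j) ≤ T := by
  have hpbar_sum : 0 ≤ ∑ j ∈ X, pbar j := sum_nonneg fun j _ => hpbar j
  have hB : X.filter (fun j => T / Γ < phat j) ⊆ G :=
    filter_div_lt_subset_of_sum_top_le hΓ hGX hcard htop (by linarith)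
  have hdev : ∑ j ∈ X.filter (fun j => T / Γ < phat j), phat j ≤ ∑ j ∈ G, phat j :=
    sum_le_sum_of_subset_of_nonneg hB fun k _ _ => hphat k
  calc ∑ j ∈ X, (if T / (Γ : ℝ) < phat j then pbar j + phat j else pbar j)
      = ∑ j ∈ X, pbar j + ∑ j ∈ X.filter (fun j => T / Γ < phat j), phat j := by
        rw [sum_filter, ← sum_add_distrib]
        exact sum_congr rfl fun j _ => by split_ifs <;> simp
    _ ≤ T := by linarith

/-- With `B = {j ∈ X : p̂_j > T/Γ}` and modified processing times
`p_j = p̄_j + p̂_j` for `j ∈ B` and `p_j = p̄_j` otherwise, if the robust load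
`p̄(X) + p̂_Γ(X)` of `X` is at most `T` then `∑_{j∈X} p_j ≤ T`. -/
theorem stmt3 {J : Type*} [DecidableEq J]
    (pbar phat : J → ℝ) (hpbar : ∀ j, 0 ≤ pbar j) (hphat : ∀ j, 0 ≤ phat j)
    (Γ : ℕ) (hΓ : 1 ≤ Γ) (T : ℝ) (hT : 0 < T)
    (X G : Finset J) (hGX : G ⊆ X) (hcard : G.card = min Γ X.card)
    (htop : ∀ j ∈ G, ∀ k ∈ X \ G, phat k ≤ phat j)
    (hload : ∑ j ∈ X, pbar j + ∑ j ∈ G, phat j ≤ T) :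
    ∑ j ∈ X, (if T / (Γ : ℝ) < phat j then pbar j + phat j else pbar j) ≤ T :=
  stmt3_general pbar phat hpbar hphat Γ hΓ T X G hGX hcard htop hload
end

section
/- Let X be a set of jobs on machine i, T > 0, B = {j ∈ X : p̂_{ij} > T/Γ}, and define p_{ij} = p̄_{ij} + p̂_{ij} for j ∈ B and p_{ij} = p̄_{ij} otherwise. Then the worst-case robust load of X satisfies p̄(X) + p̂_Γ(X) ≤ ∑_{j∈X} p_{ij} + T. -/
/-!
The deviations of the jobs of `G` that exceed `T / Γ` belong to `B` and are already paid for in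
`∑ p`; each of the at most `Γ` remaining jobs of `G` deviates by at most `T / Γ`, so together they
add at most `T`.
-/

open Finset

theorem Finset.sum_le_sum_filter_lt_add_card_nsmul {ι M : Type*} [AddCommMonoid M] [LinearOrder M]
    [IsOrderedAddMonoid M] (s : Finset ι) (f : ι → M) {c : M} (hc : 0 ≤ c) :
    ∑ j ∈ s, f j ≤ ∑ j ∈ s with c < f j, f j + #s • c := by
  rw [← sum_filter_add_sum_filter_not s (c < f ·)]
  gcongr
  calc ∑ j ∈ s with ¬c < f j, f j
      ≤ #{j ∈ s | ¬c < f j} • c := sum_le_card_nsmul _ _ _ fun j hj => not_lt.mp (mem_filter.mp hj).2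
    _ ≤ #s • c := nsmul_le_nsmul_left hc (card_filter_le s _)

theorem Finset.sum_ite_add_eq_sum_add_sum_filter {ι M : Type*} [AddCommMonoid M] (s : Finset ι)
    (p : ι → Prop) [DecidablePred p] (f g : ι → M) :
    ∑ j ∈ s, (if p j then f j + g j else f j) = ∑ j ∈ s, f j + ∑ j ∈ s with p j, g j := by
  rw [sum_filter, ← sum_add_distrib]
  exact sum_congr rfl fun j _ => by split_ifs <;> simp

/-- Also true for `m = 0`, despite the junk value `T / 0 = 0`, because then `n = 0`. -/
theorem nsmul_div_le_of_le {K : Type*} [Field K] [LinearOrder K] [IsStrictOrderedRing K]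
    {n m : ℕ} (h : n ≤ m) {T : K} (hT : 0 ≤ T) : n • (T / m) ≤ T := by
  rw [nsmul_eq_mul, mul_div_left_comm]
  exact mul_le_of_le_one_right hT (div_le_one_of_le₀ (by exact_mod_cast h) m.cast_nonneg)

theorem stmt4_general {J : Type*}
    (pbar phat : J → ℝ) (hphat : ∀ j, 0 ≤ phat j)
    (Γ : ℕ) (T : ℝ) (hT : 0 < T)
    (X G : Finset J) (hGX : G ⊆ X) (hcard : G.card = min Γ X.card) :
    ∑ j ∈ X, pbar j + ∑ j ∈ G, phat j ≤
      (∑ j ∈ X, (if T / (Γ : ℝ) < phat j then pbar j + phat j else pbar j)) + T := by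
  rw [sum_ite_add_eq_sum_add_sum_filter, add_assoc]
  gcongr
  calc ∑ j ∈ G, phat j ≤ ∑ j ∈ G with T / Γ < phat j, phat j + #G • (T / Γ) :=
        sum_le_sum_filter_lt_add_card_nsmul G phat (by positivity)
    _ ≤ ∑ j ∈ X with T / Γ < phat j, phat j + T := by
        gcongr
        · exact fun j _ _ => hphat j
        · exact nsmul_div_le_of_le (hcard ▸ min_le_left _ _) hT.le

/-- With `B = {j ∈ X : p̂_j > T/Γ}` and modified processing times
`p_j = p̄_j + p̂_j` for `j ∈ B` and `p_j = p̄_j` otherwise, the robust load satisfies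
`p̄(X) + p̂_Γ(X) ≤ ∑_{j∈X} p_j + T`. -/
theorem stmt4 {J : Type*} [DecidableEq J]
    (pbar phat : J → ℝ) (hpbar : ∀ j, 0 ≤ pbar j) (hphat : ∀ j, 0 ≤ phat j)
    (Γ : ℕ) (hΓ : 1 ≤ Γ) (T : ℝ) (hT : 0 < T)
    (X G : Finset J) (hGX : G ⊆ X) (hcard : G.card = min Γ X.card)
    (htop : ∀ j ∈ G, ∀ k ∈ X \ G, phat k ≤ phat j) :
    ∑ j ∈ X, pbar j + ∑ j ∈ G, phat j ≤
      (∑ j ∈ X, (if T / (Γ : ℝ) < phat j then pbar j + phat j else pbar j)) + T :=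
  stmt4_general pbar phat hphat Γ T hT X G hGX hcard
end

section
/- In the reduction from 3-SAT, the 3-SAT instance is satisfiable if and only if the constructed robust scheduling instance with Γ=1 has optimum robust makespan equal to 1 (and if unsatisfiable, the optimum is at least 2). -/
open scoped ENNReal

open Finset

/-!
A schedule of robust makespan `< 2` must put every variable job on one of its own two machines
and every clause job on a machine of one of its literals (all other times are `∞`), and it may
not put a clause job together with a variable job (that machine would have load `1 + 1`).
Setting each variable to the literal whose machine is *not* taken by its variable job then
satisfies every clause. Conversely, a satisfying assignment yields a schedule of makespan `1`,
and `1` is a lower bound because some variable job has nominal time `≥ 1` wherever it runs.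
-/

noncomputable section RobustScheduling

variable {M J : Type*} [Fintype J] [DecidableEq M] (pbar phat : M → J → ℝ≥0∞)

/-- The robust load for `Γ = 1`. -/
def robustLoad (σ : J → M) (i : M) : ℝ≥0∞ :=
  ∑ j ∈ univ.filter (σ · = i), pbar i j + (univ.filter (σ · = i)).sup (phat i)

def robustMakespan [Fintype M] (σ : J → M) : ℝ≥0∞ :=
  univ.sup (robustLoad pbar phat σ)

variable {pbar phat}

theorem add_le_robustLoad {σ : J → M} {i : M} {j j' : J} (hj : σ j = i) (hj' : σ j' = i) :
    pbar i j + phat i j' ≤ robustLoad pbar phat σ i :=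
  add_le_add (single_le_sum (fun _ _ => zero_le) (mem_filter.2 ⟨mem_univ _, hj⟩))
    (le_sup (mem_filter.2 ⟨mem_univ _, hj'⟩))

theorem robustLoad_le_robustMakespan [Fintype M] (σ : J → M) (i : M) :
    robustLoad pbar phat σ i ≤ robustMakespan pbar phat σ :=
  le_sup (f := robustLoad pbar phat σ) (mem_univ i)

theorem add_le_robustMakespan [Fintype M] {σ : J → M} {i : M} {j j' : J} (hj : σ j = i)
    (hj' : σ j' = i) : pbar i j + phat i j' ≤ robustMakespan pbar phat σ :=
  (add_le_robustLoad hj hj').trans (robustLoad_le_robustMakespan σ i)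

end RobustScheduling

noncomputable section ThreeSat

variable {n m : ℕ} (clauses : Fin m → Fin 3 → Fin n × Bool)

/-- Machine `(v, b)` is the machine of the literal "`v` is `b`". -/
def satPbar : Fin n × Bool → Fin n ⊕ Fin m → ℝ≥0∞ := fun i j =>
  Sum.casesOn j (fun v => if i.1 = v then 1 else ⊤) (fun _ => 0)

def satPhat : Fin n × Bool → Fin n ⊕ Fin m → ℝ≥0∞ := fun i j =>
  Sum.casesOn j (fun _ => 0) (fun c => if ∃ k, clauses c k = i then 1 else ⊤)

def Satisfies (a : Fin n → Bool) : Prop :=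
  ∀ c, ∃ k, a (clauses c k).1 = (clauses c k).2

def assignmentSchedule (a : Fin n → Bool) (k : Fin m → Fin 3) :
    Fin n ⊕ Fin m → Fin n × Bool :=
  fun j => Sum.casesOn j (fun v => (v, !a v)) (fun c => clauses c (k c))

theorem one_le_robustMakespan (v : Fin n) (σ : Fin n ⊕ Fin m → Fin n × Bool) :
    1 ≤ robustMakespan satPbar (satPhat clauses) σ := by
  have hv : 1 ≤ satPbar (σ (.inl v)) (.inl v : Fin n ⊕ Fin m) := by
    simp only [satPbar]
    split_ifs <;> simp
  exact hv.trans (le_self_add.trans (add_le_robustMakespan rfl rfl))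

theorem robustLoad_assignmentSchedule_le_one {a : Fin n → Bool} {k : Fin m → Fin 3}
    (hk : ∀ c, a (clauses c (k c)).1 = (clauses c (k c)).2) (i : Fin n × Bool) :
    robustLoad satPbar (satPhat clauses) (assignmentSchedule clauses a k) i ≤ 1 := by
  set σ := assignmentSchedule clauses a k
  by_cases hi : i.2 = a i.1
  · have no_var : ∀ v, σ (.inl v) ≠ i := by
      rintro v rfl
      simp [σ, assignmentSchedule] at hi
    have hsum : ∑ j ∈ univ.filter (σ · = i), satPbar i j = 0 := by
      refine sum_eq_zero fun j hj => ?_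
      cases j with
      | inl v => exact absurd (mem_filter.1 hj).2 (no_var v)
      | inr c => rfl
    have hsup : (univ.filter (σ · = i)).sup (satPhat clauses i) ≤ 1 := by
      refine Finset.sup_le fun j hj => ?_
      cases j with
      | inl v => exact zero_le
      | inr c =>
        have hc : ∃ k', clauses c k' = i := ⟨k c, (mem_filter.1 hj).2⟩
        simp [satPhat, hc]
    rw [robustLoad, hsum, zero_add]
    exact hsup
  · have var_only : univ.filter (σ · = i) ⊆ {.inl i.1} := by
      intro j hj
      cases j with
      | inl v =>
        obtain rfl : (v, !a v) = i := (mem_filter.1 hj).2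
        exact mem_singleton_self _
      | inr c =>
        obtain rfl : clauses c (k c) = i := (mem_filter.1 hj).2
        exact absurd (hk c).symm hi
    calc robustLoad satPbar (satPhat clauses) σ i
        ≤ ∑ j ∈ {.inl i.1}, satPbar i j + ({.inl i.1} : Finset _).sup (satPhat clauses i) :=
          add_le_add (sum_le_sum_of_subset var_only) (sup_mono var_only)
      _ = 1 := by simp [satPbar, satPhat]

theorem robustMakespan_assignmentSchedule_le_one {a : Fin n → Bool} {k : Fin m → Fin 3}
    (hk : ∀ c, a (clauses c (k c)).1 = (clauses c (k c)).2) :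
    robustMakespan satPbar (satPhat clauses) (assignmentSchedule clauses a k) ≤ 1 :=
  Finset.sup_le fun i _ => robustLoad_assignmentSchedule_le_one clauses hk i

theorem satisfies_of_robustMakespan_lt_two {σ : Fin n ⊕ Fin m → Fin n × Bool}
    (h : robustMakespan satPbar (satPhat clauses) σ < 2) :
    Satisfies clauses fun v => !(σ (.inl v)).2 := by
  have load_lt {i j j'} (hj : σ j = i) (hj' : σ j' = i) :
      satPbar i j + satPhat clauses i j' < 2 :=
    (add_le_robustMakespan hj hj').trans_lt h
  have var_home (v : Fin n) : (σ (.inl v)).1 = v := by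
    by_contra hv
    simpa [satPbar, satPhat, hv] using load_lt (j := .inl v) (j' := .inl v) rfl rfl
  intro c
  obtain ⟨i, hi⟩ : ∃ i, σ (.inr c) = i := ⟨_, rfl⟩
  obtain ⟨k, hk⟩ : ∃ k, clauses c k = i := by
    by_contra hc
    simpa [satPbar, satPhat, hc] using load_lt (j := .inr c) hi hi
  have var_elsewhere : σ (.inl i.1) ≠ i := by
    intro hvar
    have hc : ∃ k, clauses c k = i := ⟨k, hk⟩
    have := load_lt hvar hi
    simp [satPbar, satPhat, hc, one_add_one_eq_two] at this
  refine ⟨k, ?_⟩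
  rw [hk, Bool.not_eq_eq_eq_not]
  exact Bool.eq_not_of_ne fun h2 => var_elsewhere (Prod.ext (var_home _) h2)

end ThreeSat

/-- Reduction from 3-SAT with `Γ = 1`.  Machines are pairs `(v, b)` (two per
variable), jobs are variables plus clauses.  Variable job `v` has nominal time `1` on its
two machines and `∞` elsewhere, zero deviation.  The clause job for clause `c` has nominal
time `0`, deviation `1` on the three machines corresponding to the literals of `c`, and
`∞` elsewhere.  With `Γ = 1` the robust load of a machine is the sum of nominal times plus
the largest deviation on it.  The 3-SAT instance is satisfiable iff the optimum robust
makespan equals `1`; if it is unsatisfiable the optimum is at least `2`. -/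
theorem stmt6 (n₀ m₀ : ℕ) (hn : 0 < n₀)
    (clauses : Fin m₀ → Fin 3 → Fin n₀ × Bool) :
    let pbar : Fin n₀ × Bool → (Fin n₀ ⊕ Fin m₀) → ℝ≥0∞ := fun i j =>
      Sum.casesOn j (fun v => if i.1 = v then 1 else ⊤) (fun _ => 0)
    let phat : Fin n₀ × Bool → (Fin n₀ ⊕ Fin m₀) → ℝ≥0∞ := fun i j =>
      Sum.casesOn j (fun _ => 0) (fun c => if ∃ k, clauses c k = i then 1 else ⊤)
    let jobs : ((Fin n₀ ⊕ Fin m₀) → Fin n₀ × Bool) → Fin n₀ × Bool →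
        Finset (Fin n₀ ⊕ Fin m₀) := fun σ i => Finset.univ.filter (fun j => σ j = i)
    let makespan : ((Fin n₀ ⊕ Fin m₀) → Fin n₀ × Bool) → ℝ≥0∞ := fun σ =>
      Finset.univ.sup (fun i => ∑ j ∈ jobs σ i, pbar i j + (jobs σ i).sup (phat i))
    let opt : ℝ≥0∞ := ⨅ σ, makespan σ
    let satisfiable : Prop :=
      ∃ a : Fin n₀ → Bool, ∀ c, ∃ k, a (clauses c k).1 = (clauses c k).2
    (satisfiable ↔ opt = 1) ∧ (¬ satisfiable → 2 ≤ opt) := by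
  intro pbar phat jobs makespan opt satisfiable
  change ((∃ a, Satisfies clauses a) ↔
      ⨅ σ, robustMakespan satPbar (satPhat clauses) σ = 1) ∧
    (¬ (∃ a, Satisfies clauses a) → 2 ≤ ⨅ σ, robustMakespan satPbar (satPhat clauses) σ)
  have one_le_opt := le_iInf (one_le_robustMakespan clauses ⟨0, hn⟩)
  have two_le_opt (hs : ¬ ∃ a, Satisfies clauses a) :
      2 ≤ ⨅ σ, robustMakespan satPbar (satPhat clauses) σ :=
    le_iInf fun σ => not_lt.1 fun h => hs ⟨_, satisfies_of_robustMakespan_lt_two clauses h⟩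
  refine ⟨⟨fun ⟨a, ha⟩ => ?_, fun hopt => by_contra fun hs => ?_⟩, two_le_opt⟩
  · choose k hk using ha
    exact le_antisymm ((iInf_le _ _).trans (robustMakespan_assignmentSchedule_le_one clauses hk))
      one_le_opt
  · have h2 := two_le_opt hs
    rw [hopt] at h2
    norm_num at h2
end

section
/- Rounding each deviation p̂_j down to 0 if p̂_j < ε/Γ and otherwise down to the nearest (ε/Γ)(1+ε)^i yields an instance I¹ such that: (a) any schedule's robust makespan in I¹ is at most its robust makespan in I (so OPT(I) ≤ 1 implies OPT(I¹) ≤ 1), and (b) for any schedule σ, the robust makespan in I is at most (1+ε) times the robust makespan in I¹ plus ε, provided the robust makespan in I is scaled so that the target is 1. -/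
/-!
Rounding down can only decrease every subset sum, hence every `devGamma` and every makespan.
Conversely each job satisfies `p̂_j ≤ (1+ε) p̂¹_j + ε/Γ`: small deviations lose less than `ε/Γ`,
large ones lose at most a factor `1+ε`. Summed over a set of at most `Γ` jobs, the additive
errors total at most `ε`, so the `Γ` largest deviations of a machine grow by at most the factor
`1+ε` plus `ε`; the nonnegative nominal part absorbs the factor `1+ε`.
-/

/-- Sum of the `Γ` largest deviations of jobs in `X` (all of them if `|X| ≤ Γ`),
expressed as the maximum of `∑_{j∈S} p̂_j` over subsets `S ⊆ X` with `|S| ≤ Γ`. -/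
noncomputable def devGamma {J : Type*} (phat : J → ℝ) (Γ : ℕ) (X : Finset J) : ℝ :=
  (X.powerset.filter (fun S => S.card ≤ Γ)).sup'
    ⟨∅, by simp⟩ (fun S => ∑ j ∈ S, phat j)

section devGamma

variable {J : Type*} {Γ : ℕ} {X : Finset J}

theorem sum_le_devGamma (q : J → ℝ) {S : Finset J} (hSX : S ⊆ X) (hS : S.card ≤ Γ) :
    ∑ j ∈ S, q j ≤ devGamma q Γ X :=
  Finset.le_sup' (fun S => ∑ j ∈ S, q j) (by simp [hSX, hS])

theorem devGamma_mono {q q' : J → ℝ} (h : ∀ j, q j ≤ q' j) :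
    devGamma q Γ X ≤ devGamma q' Γ X :=
  Finset.sup'_mono_fun fun _ _ => Finset.sum_le_sum fun j _ => h j

theorem devGamma_le_mul_add {q q' : J → ℝ} {a δ : ℝ} (ha : 0 ≤ a) (hδ : 0 ≤ δ)
    (h : ∀ j, q j ≤ a * q' j + δ / Γ) :
    devGamma q Γ X ≤ a * devGamma q' Γ X + δ := by
  refine Finset.sup'_le _ _ fun S hS => ?_
  obtain ⟨hSX, hS⟩ : S ⊆ X ∧ S.card ≤ Γ := by simpa using hS
  have hcard : (S.card : ℝ) / Γ ≤ 1 := div_le_one_of_le₀ (by exact_mod_cast hS) Γ.cast_nonneg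
  calc ∑ j ∈ S, q j
      ≤ ∑ j ∈ S, (a * q' j + δ / Γ) := Finset.sum_le_sum fun j _ => h j
    _ = a * ∑ j ∈ S, q' j + (S.card / Γ) * δ := by
        rw [Finset.sum_add_distrib, ← Finset.mul_sum, Finset.sum_const, nsmul_eq_mul]
        ring
    _ ≤ a * devGamma q' Γ X + δ :=
        add_le_add (by gcongr; exact sum_le_devGamma q' hSX hS) (mul_le_of_le_one_left hδ hcard)

end devGamma

theorem Finset.sup'_le_mul_sup'_add {ι : Type*} {s : Finset ι} (hs : s.Nonempty) {f g : ι → ℝ}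
    {a c : ℝ} (ha : 0 ≤ a) (h : ∀ i ∈ s, f i ≤ a * g i + c) :
    s.sup' hs f ≤ a * s.sup' hs g + c :=
  Finset.sup'_le _ _ fun i hi =>
    (h i hi).trans (by gcongr; exact Finset.le_sup' g hi)

theorem le_one_add_mul_add_of_roundDown {ε θ p p₁ : ℝ} (hθ : 0 ≤ θ)
    (hsmall : p < θ → p₁ = 0) (hlarge : θ ≤ p → p ≤ (1 + ε) * p₁) :
    p ≤ (1 + ε) * p₁ + θ := by
  rcases lt_or_ge p θ with hpθ | hθp
  · simp [hsmall hpθ, hpθ.le]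
  · linarith [hlarge hθp]

theorem stmt9_general {J : Type*} [Fintype J] (m : ℕ) (hm : 0 < m)
    (pbar phat phat1 : J → ℝ)
    (hpbar : ∀ j, 0 ≤ pbar j)
    (ε : ℝ) (hε0 : 0 < ε) (Γ : ℕ)
    (hle : ∀ j, phat1 j ≤ phat j)
    (hsmall : ∀ j, phat j < ε / (Γ : ℝ) → phat1 j = 0)
    (hround : ∀ j, ε / (Γ : ℝ) ≤ phat j →
      (∃ i : ℕ, phat1 j = ε / (Γ : ℝ) * (1 + ε) ^ i) ∧ phat j ≤ (1 + ε) * phat1 j) :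
    let jobs : (J → Fin m) → Fin m → Finset J :=
      fun σ i => Finset.univ.filter (fun j => σ j = i)
    let makespan : (J → ℝ) → (J → Fin m) → ℝ := fun q σ =>
      Finset.univ.sup' ⟨⟨0, hm⟩, Finset.mem_univ _⟩
        (fun i => ∑ j ∈ jobs σ i, pbar j + devGamma q Γ (jobs σ i))
    (∀ σ, makespan phat1 σ ≤ makespan phat σ) ∧
    (∀ σ, makespan phat σ ≤ (1 + ε) * makespan phat1 σ + ε) := by
  intro jobs makespan
  have hdev : ∀ X, devGamma phat Γ X ≤ (1 + ε) * devGamma phat1 Γ X + ε :=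
    fun X => devGamma_le_mul_add (by positivity) hε0.le fun j =>
      le_one_add_mul_add_of_roundDown (by positivity) (hsmall j) fun h => (hround j h).2
  refine ⟨fun σ => Finset.sup'_mono_fun fun i _ => ?_,
    fun σ => Finset.sup'_le_mul_sup'_add _ (by positivity) fun i _ => ?_⟩
  · exact add_le_add le_rfl (devGamma_mono hle)
  · have hnominal : 0 ≤ ∑ j ∈ jobs σ i, pbar j := Finset.sum_nonneg fun j _ => hpbar j
    nlinarith [hdev (jobs σ i)]

/-- Rounding deviations on identical machines: `p̂¹_j = 0` if `p̂_j < ε/Γ`, and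
otherwise `p̂¹_j` is `p̂_j` rounded down to the nearest `(ε/Γ)(1+ε)^i` (so `p̂¹_j ≤ p̂_j ≤
(1+ε)·p̂¹_j` in that case).  Then (a) every schedule's robust makespan in the rounded
instance `I¹` is at most its robust makespan in `I` (so `OPT(I) ≤ 1` implies
`OPT(I¹) ≤ 1`), and (b) every schedule's robust makespan in `I` is at most `(1+ε)` times
its robust makespan in `I¹` plus `ε`. -/
theorem stmt9 {J : Type*} [DecidableEq J] [Fintype J] (m : ℕ) (hm : 0 < m)
    (pbar phat phat1 : J → ℝ)
    (hpbar : ∀ j, 0 ≤ pbar j) (hphat : ∀ j, 0 ≤ phat j)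
    (ε : ℝ) (hε0 : 0 < ε) (hε1 : ε < 1) (Γ : ℕ) (hΓ : 1 ≤ Γ)
    (h0 : ∀ j, 0 ≤ phat1 j)
    (hle : ∀ j, phat1 j ≤ phat j)
    (hsmall : ∀ j, phat j < ε / (Γ : ℝ) → phat1 j = 0)
    (hround : ∀ j, ε / (Γ : ℝ) ≤ phat j →
      (∃ i : ℕ, phat1 j = ε / (Γ : ℝ) * (1 + ε) ^ i) ∧ phat j ≤ (1 + ε) * phat1 j) :
    let jobs : (J → Fin m) → Fin m → Finset J :=
      fun σ i => Finset.univ.filter (fun j => σ j = i)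
    let makespan : (J → ℝ) → (J → Fin m) → ℝ := fun q σ =>
      Finset.univ.sup' ⟨⟨0, hm⟩, Finset.mem_univ _⟩
        (fun i => ∑ j ∈ jobs σ i, pbar j + devGamma q Γ (jobs σ i))
    (∀ σ, makespan phat1 σ ≤ makespan phat σ) ∧
    (∀ σ, makespan phat σ ≤ (1 + ε) * makespan phat1 σ + ε) :=
  stmt9_general m hm pbar phat phat1 hpbar ε hε0 Γ hle hsmall hround
end

section
/- Let X be a set of jobs scheduled on a machine with threshold t (all jobs in Γ(X), the Γ jobs with largest deviations, have p̂_j ≥ t, and all others have p̂_j ≤ t), and suppose the robust load p̄(X) + p̂_Γ(X) ≤ 1. Define transformed processing times p_j = p̄_j + p̂_j − t if p̂_j ≥ t, and p_j = p̄_j if p̂_j < t. If t > 0 and |X| ≥ Γ, then ∑_{j∈X} p_j ≤ 1 − Γ·t; if t = 0 then ∑_{j∈X} p_j ≤ 1. -/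
open Finset

section TransformedTime

variable {α : Type*} [AddCommGroup α] [LinearOrder α]

theorem ite_add_sub_eq_of_le {t p b : α} (h : p ≤ t) :
    (if t ≤ p then b + p - t else b) = b := by
  split_ifs with htp
  · rw [le_antisymm h htp, add_sub_cancel_right]
  · rfl

/-- Jobs outside `G` keep their nominal time (one with `p̂_j = t` gets `p̄_j + p̂_j - t = p̄_j`),
and each job of `G` loses `t` from its robust time. -/
theorem sum_ite_add_sub_eq {J : Type*} [DecidableEq J] (pbar phat : J → α) {X G : Finset J}
    {t : α} (hGX : G ⊆ X) (htG : ∀ j ∈ G, t ≤ phat j) (htX : ∀ j ∈ X \ G, phat j ≤ t) :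
    ∑ j ∈ X, (if t ≤ phat j then pbar j + phat j - t else pbar j)
      = ∑ j ∈ X, pbar j + ∑ j ∈ G, phat j - G.card • t := by
  have houter : ∑ j ∈ X \ G, (if t ≤ phat j then pbar j + phat j - t else pbar j)
      = ∑ j ∈ X \ G, pbar j :=
    sum_congr rfl fun j hj => ite_add_sub_eq_of_le (htX j hj)
  have hinner : ∑ j ∈ G, (if t ≤ phat j then pbar j + phat j - t else pbar j)
      = ∑ j ∈ G, pbar j + ∑ j ∈ G, phat j - G.card • t := by
    rw [sum_congr rfl fun j hj => if_pos (htG j hj), sum_sub_distrib, sum_add_distrib,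
      sum_const]
  rw [← sum_sdiff hGX, houter, hinner, ← sum_sdiff hGX (f := pbar)]
  abel

end TransformedTime

theorem stmt12_general {J : Type*} [DecidableEq J]
    (pbar phat : J → ℝ)
    (Γ : ℕ) (X G : Finset J)
    (hGX : G ⊆ X) (hcard : G.card = min Γ X.card)
    (t : ℝ) (htG : ∀ j ∈ G, t ≤ phat j) (htX : ∀ j ∈ X \ G, phat j ≤ t)
    (hload : ∑ j ∈ X, pbar j + ∑ j ∈ G, phat j ≤ 1) :
    (0 < t → Γ ≤ X.card →
      ∑ j ∈ X, (if t ≤ phat j then pbar j + phat j - t else pbar j) ≤ 1 - (Γ : ℝ) * t) ∧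
    (t = 0 →
      ∑ j ∈ X, (if t ≤ phat j then pbar j + phat j - t else pbar j) ≤ 1) := by
  rw [sum_ite_add_sub_eq pbar phat hGX htG htX, nsmul_eq_mul]
  refine ⟨fun _ hΓX => ?_, fun ht => ?_⟩
  · rw [hcard, min_eq_left hΓX]
    linarith
  · rw [ht, mul_zero, sub_zero]
    exact hload

/-- Let `X` be a set of jobs with threshold `t` (every job in the top set
`G = Γ(X)` of the `min(Γ,|X|)` largest deviations has `p̂_j ≥ t`, every other job of `X`
has `p̂_j ≤ t`) and robust load `p̄(X) + p̂_Γ(X) ≤ 1`.  With transformed processing times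
`p_j = p̄_j + p̂_j − t` if `p̂_j ≥ t` and `p_j = p̄_j` otherwise: if `t > 0` and `|X| ≥ Γ`
then `∑_{j∈X} p_j ≤ 1 − Γ·t`; if `t = 0` then `∑_{j∈X} p_j ≤ 1`. -/
theorem stmt12 {J : Type*} [DecidableEq J]
    (pbar phat : J → ℝ) (hpbar : ∀ j, 0 ≤ pbar j) (hphat : ∀ j, 0 ≤ phat j)
    (Γ : ℕ) (hΓ : 1 ≤ Γ) (X G : Finset J)
    (hGX : G ⊆ X) (hcard : G.card = min Γ X.card)
    (htop : ∀ j ∈ G, ∀ k ∈ X \ G, phat k ≤ phat j)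
    (t : ℝ) (ht0 : 0 ≤ t) (htG : ∀ j ∈ G, t ≤ phat j) (htX : ∀ j ∈ X \ G, phat j ≤ t)
    (hload : ∑ j ∈ X, pbar j + ∑ j ∈ G, phat j ≤ 1) :
    (0 < t → Γ ≤ X.card →
      ∑ j ∈ X, (if t ≤ phat j then pbar j + phat j - t else pbar j) ≤ 1 - (Γ : ℝ) * t) ∧
    (t = 0 →
      ∑ j ∈ X, (if t ≤ phat j then pbar j + phat j - t else pbar j) ≤ 1) :=
  stmt12_general pbar phat Γ X G hGX hcard t htG htX hload
end

section
/- Let X be a set of jobs on a machine, t ≥ 0 a threshold, and ε > 0. Define p_j = p̄_j + p̂_j − t if p̂_j ≥ t, and p_j = p̄_j if p̂_j < t, and capacity c = 1 − Γ·t + ε. If ∑_{j∈X} p_j ≤ (1+ε)·c, then the robust load p̄(X) + p̂_Γ(X) ≤ Γ·t + (1+ε)·(1 − Γ·t + ε) ≤ (1+ε)². -/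
theorem devGamma_le {J : Type*} {phat : J → ℝ} {Γ : ℕ} {X : Finset J} {b : ℝ}
    (h : ∀ S ⊆ X, S.card ≤ Γ → ∑ j ∈ S, phat j ≤ b) : devGamma phat Γ X ≤ b :=
  Finset.sup'_le _ _ fun S hS => by
    rw [Finset.mem_filter, Finset.mem_powerset] at hS
    exact h S hS.1 hS.2

section TruncatedTime

variable {J : Type*} (pbar phat : J → ℝ) (t : ℝ)

/-- The paper's transformed time `p_j`. -/
noncomputable def truncTime (j : J) : ℝ :=
  if t ≤ phat j then pbar j + phat j - t else pbar j

variable {pbar phat t}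

theorem le_truncTime (j : J) : pbar j ≤ truncTime pbar phat t j := by
  unfold truncTime
  split_ifs <;> linarith

theorem add_le_truncTime_add (j : J) : pbar j + phat j ≤ truncTime pbar phat t j + t := by
  unfold truncTime
  split_ifs <;> linarith

theorem sum_add_sum_le_sum_truncTime {S X : Finset J} (hSX : S ⊆ X) :
    ∑ j ∈ X, pbar j + ∑ j ∈ S, phat j ≤ ∑ j ∈ X, truncTime pbar phat t j + S.card * t := by
  classical
  have hS : ∑ j ∈ S, pbar j + ∑ j ∈ S, phat j ≤ ∑ j ∈ S, truncTime pbar phat t j + S.card * t := by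
    simpa [Finset.sum_add_distrib] using Finset.sum_le_sum fun j (_ : j ∈ S) ↦
      add_le_truncTime_add (pbar := pbar) (phat := phat) (t := t) j
  have hXS : ∑ j ∈ X \ S, pbar j ≤ ∑ j ∈ X \ S, truncTime pbar phat t j :=
    Finset.sum_le_sum fun j _ ↦ le_truncTime j
  rw [← Finset.sum_sdiff hSX, ← Finset.sum_sdiff (f := truncTime pbar phat t) hSX]
  linarith

theorem sum_add_devGamma_le_sum_truncTime (ht : 0 ≤ t) (Γ : ℕ) (X : Finset J) :
    ∑ j ∈ X, pbar j + devGamma phat Γ X ≤ Γ * t + ∑ j ∈ X, truncTime pbar phat t j := by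
  have h : devGamma phat Γ X ≤
      Γ * t + ∑ j ∈ X, truncTime pbar phat t j - ∑ j ∈ X, pbar j := by
    refine devGamma_le fun S hSX hSΓ ↦ ?_
    have hcard : (S.card : ℝ) * t ≤ Γ * t := by gcongr
    linarith [sum_add_sum_le_sum_truncTime (pbar := pbar) (phat := phat) (t := t) hSX]
  linarith

end TruncatedTime

theorem stmt13_general {J : Type*}
    (pbar phat : J → ℝ)
    (Γ : ℕ) (X : Finset J)
    (t ε : ℝ) (ht0 : 0 ≤ t) (hε : 0 < ε)
    (hcap : ∑ j ∈ X, (if t ≤ phat j then pbar j + phat j - t else pbar j) ≤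
      (1 + ε) * (1 - (Γ : ℝ) * t + ε)) :
    ∑ j ∈ X, pbar j + devGamma phat Γ X ≤ (Γ : ℝ) * t + (1 + ε) * (1 - (Γ : ℝ) * t + ε) ∧
    (Γ : ℝ) * t + (1 + ε) * (1 - (Γ : ℝ) * t + ε) ≤ (1 + ε) ^ 2 := by
  refine ⟨?_, ?_⟩
  · have h := sum_add_devGamma_le_sum_truncTime (pbar := pbar) (phat := phat) ht0 Γ X
    unfold truncTime at h
    linarith
  · have hΓt : 0 ≤ ε * (Γ * t) := by positivity
    calc (Γ : ℝ) * t + (1 + ε) * (1 - Γ * t + ε) = (1 + ε) ^ 2 - ε * (Γ * t) := by ring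
      _ ≤ (1 + ε) ^ 2 := by linarith

/-- With transformed times `p_j = p̄_j + p̂_j − t` if `p̂_j ≥ t` and
`p_j = p̄_j` otherwise, and capacity `c = 1 − Γ·t + ε`: if `∑_{j∈X} p_j ≤ (1+ε)·c`, then
the robust load satisfies `p̄(X) + p̂_Γ(X) ≤ Γ·t + (1+ε)·(1 − Γ·t + ε) ≤ (1+ε)²`. -/
theorem stmt13 {J : Type*} [DecidableEq J]
    (pbar phat : J → ℝ) (hpbar : ∀ j, 0 ≤ pbar j) (hphat : ∀ j, 0 ≤ phat j)
    (Γ : ℕ) (hΓ : 1 ≤ Γ) (X : Finset J)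
    (t ε : ℝ) (ht0 : 0 ≤ t) (hε : 0 < ε) (hΓt : (Γ : ℝ) * t ≤ 1)
    (hcap : ∑ j ∈ X, (if t ≤ phat j then pbar j + phat j - t else pbar j) ≤
      (1 + ε) * (1 - (Γ : ℝ) * t + ε)) :
    ∑ j ∈ X, pbar j + devGamma phat Γ X ≤ (Γ : ℝ) * t + (1 + ε) * (1 - (Γ : ℝ) * t + ε) ∧
    (Γ : ℝ) * t + (1 + ε) * (1 - (Γ : ℝ) * t + ε) ≤ (1 + ε) ^ 2 :=
  stmt13_general pbar phat Γ X t ε ht0 hε hcap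
end
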